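/- Consider the eigenvalue problem N^{-1}M u = λu with M, N Hermitian and N positive definite, so N^{-1}M = X₁Λ₁Y₁^H + X₂Λ₂Y₂^H is diagonalizable with [X₁,X₂]^{-1} = [Y₁^H; Y₂^H]. Let (λ̂, û) be any scalar-vector pair, let δ = min_i |(Λ₂)_{ii} − λ̂| > 0, and let P = I − (X₁^†)^H X₁^H be the orthogonal projection onto the orthogonal complement of the column space of X₁. Then ‖Pû‖ ≤ √(κ(N)) ‖(N^{-1}M − λ̂ I) û‖ / δ, where κ(N) = ‖N‖‖N^{-1}‖. -/

import Mathlib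

/-!
Put `L = N^{1/2}` and `T = L⁻¹ M L⁻¹`. Then `T` is Hermitian and `T L = L (N⁻¹M)`, so `L` carries
the `N⁻¹M`-invariant space `V = col X₁` onto a `T`-invariant space `U`, and `Uᗮ` is `T`-invariant
as well. An eigenvector of `T` in `Uᗮ` is `L` applied to an eigenvector of `N⁻¹M` outside `V`, whose
eigenvalue must be an entry of `Λ₂`; hence all eigenvalues of `T` on `Uᗮ` lie at distance `≥ δ`
from `λ̂`, and the spectral theorem gives `δ ‖P_{Uᗮ} L û‖ ≤ ‖(T - λ̂) L û‖ = ‖L r‖ ≤ ‖L‖ ‖r‖`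
for the residual `r = (N⁻¹M - λ̂) û`. Since `û - L⁻¹ P_{Uᗮ} L û ∈ V`, the projection of `û` onto
`Vᗮ` has norm at most `‖L⁻¹‖ ‖P_{Uᗮ} L û‖`, and `‖L‖ ‖L⁻¹‖ = √κ(N)`.
-/

open Matrix
open scoped ComplexOrder

/-- The spectral (ℓ₂ operator) norm of a complex matrix. -/
noncomputable def specNormC {m n : Type*} [Fintype m] [Fintype n] [DecidableEq n]
    (A : Matrix m n ℂ) : ℝ :=
  ‖LinearMap.toContinuousLinearMap (Matrix.toEuclideanLin A)‖

/-- The Euclidean norm of a complex vector. -/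
noncomputable def evNorm {n : Type*} [Fintype n] (v : n → ℂ) : ℝ :=
  Real.sqrt (∑ i, ‖v i‖ ^ 2)

open scoped Matrix.Norms.L2Operator MatrixOrder

namespace LinearMap.IsSymmetric

variable {𝕜 E : Type*} [RCLike 𝕜] [NormedAddCommGroup E] [InnerProductSpace 𝕜 E]
  [FiniteDimensional 𝕜 E] {T : Module.End 𝕜 E}

theorem mul_norm_le_norm_sub_smul (hT : T.IsSymmetric) {c : 𝕜} {δ : ℝ}
    (hsep : ∀ μ, Module.End.HasEigenvalue T μ → δ ≤ ‖μ - c‖) (v : E) :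
    δ * ‖v‖ ≤ ‖T v - c • v‖ := by
  rcases lt_or_ge δ 0 with hδ | hδ
  · exact (mul_nonpos_of_nonpos_of_nonneg hδ.le (norm_nonneg v)).trans (norm_nonneg _)
  set b := hT.eigenvectorBasis rfl
  have hcoord : ∀ i, b.repr (T v - c • v) i = (hT.eigenvalues rfl i - c) * b.repr v i := by
    intro i
    simp [b, hT.eigenvectorBasis_apply_self_apply, sub_mul]
  rw [← b.repr.norm_map v, ← b.repr.norm_map, EuclideanSpace.norm_eq, EuclideanSpace.norm_eq,
    ← Real.sqrt_sq hδ, ← Real.sqrt_mul (sq_nonneg δ), Finset.mul_sum]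
  gcongr with i
  rw [hcoord, norm_mul, mul_pow]
  gcongr
  exact hsep _ (hT.hasEigenvalue_eigenvalues rfl i)

theorem apply_starProjection {K : Submodule 𝕜 E} (hT : T.IsSymmetric) (hK : K ∈ T.invtSubmodule)
    (w : E) : T (K.starProjection w) = K.starProjection (T w) := by
  have hKo := hT.orthogonalComplement_mem_invtSubmodule hK
  conv_rhs => rw [← K.starProjection_add_starProjection_orthogonal w, map_add, map_add]
  rw [K.starProjection_eq_self_iff.mpr (hK (K.starProjection_apply_mem w)),
    K.starProjection_apply_eq_zero_iff.mpr (hKo (Kᗮ.starProjection_apply_mem w)), add_zero]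

theorem mul_norm_starProjection_orthogonal_le (hT : T.IsSymmetric) {U : Submodule 𝕜 E}
    (hU : U ∈ T.invtSubmodule) {c : 𝕜} {δ : ℝ}
    (hsep : ∀ μ, ∀ x ∈ Uᗮ, x ≠ 0 → T x = μ • x → δ ≤ ‖μ - c‖) (w : E) :
    δ * ‖Uᗮ.starProjection w‖ ≤ ‖T w - c • w‖ := by
  have hUo := hT.orthogonalComplement_mem_invtSubmodule hU
  have hsep' : ∀ μ, Module.End.HasEigenvalue (T.restrict hUo) μ → δ ≤ ‖μ - c‖ := by
    intro μ hμ
    obtain ⟨x, hx⟩ := hμ.exists_hasEigenvector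
    refine hsep μ x x.2 (by simpa using hx.2) ?_
    exact congrArg Subtype.val (Module.End.mem_eigenspace_iff.mp hx.1)
  calc δ * ‖Uᗮ.starProjection w‖
      ≤ ‖T (Uᗮ.starProjection w) - c • Uᗮ.starProjection w‖ :=
        (hT.restrict_invariant hUo).mul_norm_le_norm_sub_smul hsep'
          ⟨_, Uᗮ.starProjection_apply_mem w⟩
    _ = ‖Uᗮ.starProjection (T w - c • w)‖ := by
        rw [map_sub, map_smul, hT.apply_starProjection hUo]
    _ ≤ ‖T w - c • w‖ := Uᗮ.norm_starProjection_apply_le _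

end LinearMap.IsSymmetric

section InnerProductSpace

variable {𝕜 E F : Type*} [RCLike 𝕜] [NormedAddCommGroup E] [InnerProductSpace 𝕜 E]
  [NormedAddCommGroup F] [InnerProductSpace 𝕜 F]

theorem Submodule.norm_starProjection_orthogonal_le_of_leftInverse (V : Submodule 𝕜 E)
    [V.HasOrthogonalProjection] {f : E →L[𝕜] F} {g : F →L[𝕜] E} (hgf : Function.LeftInverse g f)
    [(V.map (f : E →ₗ[𝕜] F)).HasOrthogonalProjection] (v : E) :
    ‖Vᗮ.starProjection v‖ ≤ ‖g‖ * ‖(V.map (f : E →ₗ[𝕜] F))ᗮ.starProjection (f v)‖ := by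
  set U := V.map (f : E →ₗ[𝕜] F)
  set w := Uᗮ.starProjection (f v)
  obtain ⟨u, hu, hfu⟩ : f v - w ∈ U := by
    rw [← U.starProjection_add_starProjection_orthogonal (f v), add_sub_cancel_right]
    exact U.starProjection_apply_mem _
  rw [ContinuousLinearMap.coe_coe] at hfu
  have hvu : v - g w = u := by
    rw [← hgf u, hfu, map_sub, hgf v]
  calc ‖Vᗮ.starProjection v‖ = ‖Vᗮ.starProjection (g w)‖ := by
        rw [← sub_add_cancel v (g w), map_add, hvu,
          Vᗮ.starProjection_apply_eq_zero_iff.mpr (V.le_orthogonal_orthogonal hu), zero_add]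
    _ ≤ ‖g w‖ := Vᗮ.norm_starProjection_apply_le _
    _ ≤ ‖g‖ * ‖w‖ := g.le_opNorm w

theorem norm_starProjection_orthogonal_le_of_isSymmetric_conj [FiniteDimensional 𝕜 E]
    [FiniteDimensional 𝕜 F] {A : Module.End 𝕜 E} {T : Module.End 𝕜 F} (hT : T.IsSymmetric)
    {f : E →L[𝕜] F} {g : F →L[𝕜] E} (hgf : Function.LeftInverse g f)
    (hfg : Function.RightInverse g f) (hTf : ∀ x, T (f x) = f (A x))
    {V : Submodule 𝕜 E} (hV : V ∈ A.invtSubmodule) {c : 𝕜} {δ : ℝ} (hδ : 0 < δ)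
    (hsep : ∀ μ y, y ∉ V → A y = μ • y → δ ≤ ‖μ - c‖) (v : E) :
    ‖Vᗮ.starProjection v‖ ≤ ‖g‖ * ‖f‖ * ‖A v - c • v‖ / δ := by
  set U := V.map (f : E →ₗ[𝕜] F)
  have hU : U ∈ T.invtSubmodule := by
    rintro _ ⟨x, hx, rfl⟩
    exact ⟨A x, hV hx, (hTf x).symm⟩
  have hsepU : ∀ μ, ∀ x ∈ Uᗮ, x ≠ 0 → T x = μ • x → δ ≤ ‖μ - c‖ := by
    intro μ x hxU hx0 hTx
    refine hsep μ (g x) (fun hgx ↦ hx0 ?_) ?_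
    · exact Submodule.disjoint_def.mp U.orthogonal_disjoint x ⟨g x, hgx, hfg x⟩ hxU
    · rw [← hgf (A (g x)), ← hTf, hfg x, hTx, map_smul]
  calc ‖Vᗮ.starProjection v‖ ≤ ‖g‖ * ‖Uᗮ.starProjection (f v)‖ :=
        V.norm_starProjection_orthogonal_le_of_leftInverse hgf v
    _ ≤ ‖g‖ * (‖T (f v) - c • f v‖ / δ) := by
        gcongr
        rw [le_div_iff₀' hδ]
        exact hT.mul_norm_starProjection_orthogonal_le hU hsepU (f v)
    _ = ‖g‖ * (‖f (A v - c • v)‖ / δ) := by rw [hTf, map_sub, map_smul]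
    _ ≤ ‖g‖ * (‖f‖ * ‖A v - c • v‖ / δ) := by gcongr; exact f.le_opNorm _
    _ = ‖g‖ * ‖f‖ * ‖A v - c • v‖ / δ := by ring

end InnerProductSpace

namespace Matrix

variable {𝕜 : Type*} [RCLike 𝕜] {m r s : Type*} [Fintype m] [Fintype r] [DecidableEq r]
  [Fintype s] [DecidableEq s] {A : Matrix m m 𝕜} {X1 : Matrix m r 𝕜} {X2 : Matrix m s 𝕜}
  {Y1H : Matrix r m 𝕜} {Y2H : Matrix s m 𝕜} {Λ1 : r → 𝕜} {Λ2 : s → 𝕜}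

theorem mul_eq_mul_diagonal_of_eq_add (hinv2 : fromRows Y1H Y2H * fromCols X1 X2 = 1)
    (hdiag : A = X1 * diagonal Λ1 * Y1H + X2 * diagonal Λ2 * Y2H) : A * X1 = X1 * diagonal Λ1 := by
  rw [fromRows_mul_fromCols, ← fromBlocks_one] at hinv2
  have h11 : Y1H * X1 = 1 := congrArg toBlocks₁₁ hinv2
  have h21 : Y2H * X1 = 0 := congrArg toBlocks₂₁ hinv2
  rw [hdiag, Matrix.add_mul, Matrix.mul_assoc _ Y1H, h11, Matrix.mul_assoc _ Y2H, h21]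
  simp

theorem mul_eq_diagonal_mul_of_eq_add (hinv2 : fromRows Y1H Y2H * fromCols X1 X2 = 1)
    (hdiag : A = X1 * diagonal Λ1 * Y1H + X2 * diagonal Λ2 * Y2H) :
    Y2H * A = diagonal Λ2 * Y2H := by
  rw [fromRows_mul_fromCols, ← fromBlocks_one] at hinv2
  have h21 : Y2H * X1 = 0 := congrArg toBlocks₂₁ hinv2
  have h22 : Y2H * X2 = 1 := congrArg toBlocks₂₂ hinv2
  rw [hdiag, Matrix.mul_add]
  simp only [← Matrix.mul_assoc, h21, h22, Matrix.zero_mul, Matrix.one_mul, zero_add]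

theorem mem_range_of_apply_eq_smul_of_notMem_range [DecidableEq m]
    (hinv1 : fromCols X1 X2 * fromRows Y1H Y2H = 1) (hinv2 : fromRows Y1H Y2H * fromCols X1 X2 = 1)
    (hdiag : A = X1 * diagonal Λ1 * Y1H + X2 * diagonal Λ2 * Y2H) {μ : 𝕜}
    {y : EuclideanSpace 𝕜 m} (hy : y ∉ LinearMap.range (toEuclideanLin X1))
    (hAy : toEuclideanLin A y = μ • y) : μ ∈ Set.range Λ2 := by
  by_contra hμ
  set v := WithLp.ofLp y
  have hAv : A *ᵥ v = μ • v := congrArg WithLp.ofLp hAy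
  have hβ : Y2H *ᵥ v = 0 := by
    have h := congrArg (· *ᵥ v) (mul_eq_diagonal_mul_of_eq_add hinv2 hdiag)
    simp only [← mulVec_mulVec, hAv, mulVec_smul] at h
    funext j
    have hj : Λ2 j * (Y2H *ᵥ v) j = μ * (Y2H *ᵥ v) j := by
      simpa [mulVec_diagonal] using (congrFun h j).symm
    refine (mul_eq_zero.mp ?_).resolve_left (sub_ne_zero.mpr fun heq ↦ hμ ⟨j, heq⟩)
    rw [sub_mul, hj, sub_self]
  refine hy ⟨WithLp.toLp 2 (Y1H *ᵥ v), congrArg (WithLp.toLp 2) ?_⟩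
  rw [fromCols_mul_fromRows] at hinv1
  calc X1 *ᵥ Y1H *ᵥ v = (X1 * Y1H + X2 * Y2H) *ᵥ v := by
        rw [add_mulVec, ← mulVec_mulVec, ← mulVec_mulVec, hβ, mulVec_zero, add_zero]
    _ = v := by rw [hinv1, one_mulVec]

theorem range_toEuclideanLin_mem_invtSubmodule [DecidableEq m] {B : Matrix r r 𝕜}
    (h : A * X1 = X1 * B) :
    LinearMap.range (toEuclideanLin X1) ∈ Module.End.invtSubmodule (toEuclideanLin A) := by
  rintro _ ⟨c, rfl⟩
  refine ⟨toEuclideanLin B c, congrArg (WithLp.toLp 2) ?_⟩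
  change X1 *ᵥ B *ᵥ WithLp.ofLp c = A *ᵥ X1 *ᵥ WithLp.ofLp c
  rw [mulVec_mulVec, mulVec_mulVec, h]

theorem toEuclideanLin_one_sub_mul_eq_starProjection [DecidableEq m] {X : Matrix m r 𝕜}
    {Xp : Matrix r m 𝕜} (h1 : X * Xp * X = X) (h3 : (X * Xp)ᴴ = X * Xp) (v : EuclideanSpace 𝕜 m) :
    toEuclideanLin (1 - X * Xp) v = (LinearMap.range (toEuclideanLin X))ᗮ.starProjection v := by
  have hXP : Xᴴ * (1 - X * Xp) = 0 := by
    rw [Matrix.mul_sub, Matrix.mul_one, ← h3, ← conjTranspose_mul, h1, sub_self]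
  symm
  apply Submodule.eq_starProjection_of_mem_of_inner_eq_zero
  · rintro _ ⟨c, rfl⟩
    rw [← LinearMap.adjoint_inner_right, ← toEuclideanLin_conjTranspose_eq_adjoint,
      ← LinearMap.comp_apply, ← toLpLin_mul_same, hXP, map_zero, LinearMap.zero_apply,
      inner_zero_right]
  · intro w hw
    refine Submodule.inner_right_of_mem_orthogonal
      (LinearMap.mem_range.mpr ⟨toEuclideanLin Xp v, ?_⟩) hw
    rw [← LinearMap.comp_apply, ← toLpLin_mul_same, map_sub, toLpLin_one, LinearMap.sub_apply,
      LinearMap.id_apply, sub_sub_cancel]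

theorem IsHermitian.inv_mul_mul_inv [DecidableEq m] {L M : Matrix m m 𝕜} (hL : L.IsHermitian)
    (hM : M.IsHermitian) : (L⁻¹ * M * L⁻¹).IsHermitian := by
  simpa only [hL.inv.eq] using isHermitian_conjTranspose_mul_mul L⁻¹ hM

theorem inv_mul_mul_inv_mul_self [DecidableEq m] {L : Matrix m m 𝕜} (hL : IsUnit L.det)
    (M : Matrix m m 𝕜) : L⁻¹ * M * L⁻¹ * L = L * ((L * L)⁻¹ * M) := by
  rw [Matrix.mul_inv_rev]
  simp only [Matrix.mul_assoc, nonsing_inv_mul _ hL, mul_nonsing_inv_cancel_left _ _ hL,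
    Matrix.mul_one]

theorem PosDef.sqrt_norm_mul_norm_inv [DecidableEq m] {N : Matrix m m 𝕜} (hN : N.PosDef) :
    √(‖N‖ * ‖N⁻¹‖) = ‖CFC.sqrt N‖ * ‖(CFC.sqrt N)⁻¹‖ := by
  set L := CFC.sqrt N
  have hL : L.IsHermitian := (CFC.sqrt_nonneg N).isSelfAdjoint
  have hLL : L * L = N := CFC.sqrt_mul_sqrt_self N hN.posSemidef.nonneg
  rw [← hLL, Matrix.mul_inv_rev,
    IsSelfAdjoint.norm_mul_self hL, IsSelfAdjoint.norm_mul_self hL.inv, ← mul_pow,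
    Real.sqrt_sq (by positivity)]

theorem norm_starProjection_orthogonal_le_of_isHermitian_conj [DecidableEq m]
    {A T L : Matrix m m 𝕜} (hT : T.IsHermitian) (hL : IsUnit L.det) (hTL : T * L = L * A)
    {X : Matrix m r 𝕜} {B : Matrix r r 𝕜} (hAX : A * X = X * B) {c : 𝕜} {δ : ℝ} (hδ : 0 < δ)
    (hsep : ∀ μ y, y ∉ LinearMap.range (toEuclideanLin X) → toEuclideanLin A y = μ • y →
      δ ≤ ‖μ - c‖) (v : EuclideanSpace 𝕜 m) :
    ‖(LinearMap.range (toEuclideanLin X))ᗮ.starProjection v‖ ≤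
      ‖L⁻¹‖ * ‖L‖ * ‖toEuclideanLin A v - c • v‖ / δ :=
  norm_starProjection_orthogonal_le_of_isSymmetric_conj (isSymmetric_toEuclideanLin_iff.mpr hT)
    (f := toEuclideanCLM (n := m) (𝕜 := 𝕜) L) (g := toEuclideanCLM (n := m) (𝕜 := 𝕜) L⁻¹)
    (fun x ↦ by rw [← mul_apply_eq_comp, ← map_mul, nonsing_inv_mul _ hL, map_one,
      one_apply_eq_self])
    (fun x ↦ by rw [← mul_apply_eq_comp, ← map_mul, mul_nonsing_inv _ hL, map_one,
      one_apply_eq_self])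
    (fun x ↦ congrArg (WithLp.toLp 2) (by
      change T *ᵥ L *ᵥ x.ofLp = L *ᵥ A *ᵥ x.ofLp
      rw [mulVec_mulVec, mulVec_mulVec, hTL]))
    (range_toEuclideanLin_mem_invtSubmodule hAX) hδ hsep v

end Matrix

theorem specNormC_eq_norm {m n : Type*} [Fintype m] [Fintype n] [DecidableEq n]
    (A : Matrix m n ℂ) : specNormC A = ‖A‖ := rfl

theorem evNorm_eq_norm_toLp {n : Type*} [Fintype n] (v : n → ℂ) :
    evNorm v = ‖WithLp.toLp 2 v‖ := by
  simp [evNorm, EuclideanSpace.norm_eq]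

theorem generalized_davis_kahan_general {n r s : ℕ}
    (M N : Matrix (Fin n) (Fin n) ℂ) (hM : M.IsHermitian) (hN : N.PosDef)
    (X1 : Matrix (Fin n) (Fin r) ℂ) (X2 : Matrix (Fin n) (Fin s) ℂ)
    (Y1H : Matrix (Fin r) (Fin n) ℂ) (Y2H : Matrix (Fin s) (Fin n) ℂ)
    (hinv1 : fromCols X1 X2 * fromRows Y1H Y2H = 1)
    (hinv2 : fromRows Y1H Y2H * fromCols X1 X2 = 1)
    (Λ1 : Fin r → ℂ) (Λ2 : Fin s → ℂ)
    (hdiag : N⁻¹ * M = X1 * Matrix.diagonal Λ1 * Y1H + X2 * Matrix.diagonal Λ2 * Y2H)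
    (lamhat : ℂ) (uhat : Fin n → ℂ)
    (δ : ℝ) (hδ : 0 < δ) (hsep : ∀ i, δ ≤ ‖Λ2 i - lamhat‖)
    (X1p : Matrix (Fin r) (Fin n) ℂ)
    (hmp1 : X1 * X1p * X1 = X1)
    (hmp3 : (X1 * X1p)ᴴ = X1 * X1p) :
    evNorm (((1 : Matrix (Fin n) (Fin n) ℂ) - X1pᴴ * X1ᴴ) *ᵥ uhat) ≤
      Real.sqrt (specNormC N * specNormC N⁻¹) *
        evNorm ((N⁻¹ * M - lamhat • 1) *ᵥ uhat) / δ := by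
  set L := CFC.sqrt N
  have hL : L.IsHermitian := (CFC.sqrt_nonneg N).isSelfAdjoint
  have hLL : L * L = N := CFC.sqrt_mul_sqrt_self N hN.posSemidef.nonneg
  have hLdet : IsUnit L.det :=
    (isUnit_iff_isUnit_det L).mp ((CFC.isUnit_sqrt_iff N hN.posSemidef.nonneg).mpr hN.isUnit)
  have hTL : L⁻¹ * M * L⁻¹ * L = L * (N⁻¹ * M) := by
    rw [← hLL]
    exact inv_mul_mul_inv_mul_self hLdet M
  have key := norm_starProjection_orthogonal_le_of_isHermitian_conj (hL.inv_mul_mul_inv hM)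
    hLdet hTL (mul_eq_mul_diagonal_of_eq_add hinv2 hdiag) hδ
    (fun μ y hy hAy ↦ by
      obtain ⟨j, rfl⟩ := mem_range_of_apply_eq_smul_of_notMem_range hinv1 hinv2 hdiag hy hAy
      exact hsep j)
    (WithLp.toLp 2 uhat)
  calc evNorm ((1 - X1pᴴ * X1ᴴ) *ᵥ uhat)
      = ‖(LinearMap.range (toEuclideanLin X1))ᗮ.starProjection (WithLp.toLp 2 uhat)‖ := by
        rw [← conjTranspose_mul, hmp3, evNorm_eq_norm_toLp,
          ← toEuclideanLin_one_sub_mul_eq_starProjection hmp1 hmp3]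
        rfl
    _ ≤ ‖L⁻¹‖ * ‖L‖ * ‖toEuclideanLin (N⁻¹ * M) (WithLp.toLp 2 uhat) - lamhat • WithLp.toLp 2 uhat‖
        / δ := key
    _ = _ := by
        rw [specNormC_eq_norm, specNormC_eq_norm, hN.sqrt_norm_mul_norm_inv, mul_comm ‖L⁻¹‖,
          evNorm_eq_norm_toLp, sub_mulVec, smul_mulVec, one_mulVec]
        rfl

/-- Generalized Davis–Kahan theorem: for the eigenvalue problem `N⁻¹M u = λu` with `M, N`
Hermitian and `N ≻ 0`, diagonalization `N⁻¹M = X₁Λ₁Y₁ᴴ + X₂Λ₂Y₂ᴴ` where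
`[X₁,X₂]⁻¹ = [Y₁ᴴ; Y₂ᴴ]`, any pair `(λ̂, û)`, `δ = min_i |(Λ₂)ᵢᵢ − λ̂| > 0`, and
`P = I − (X₁†)ᴴX₁ᴴ` the projection onto the orthogonal complement of the column space of
`X₁` (with `X1p` the Moore–Penrose pseudo-inverse of `X₁`):
`‖Pû‖ ≤ √(κ(N)) ‖(N⁻¹M − λ̂I)û‖ / δ` where `κ(N) = ‖N‖‖N⁻¹‖`. -/
theorem generalized_davis_kahan {n r s : ℕ}
    (M N : Matrix (Fin n) (Fin n) ℂ) (hM : M.IsHermitian) (hN : N.PosDef)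
    (X1 : Matrix (Fin n) (Fin r) ℂ) (X2 : Matrix (Fin n) (Fin s) ℂ)
    (Y1H : Matrix (Fin r) (Fin n) ℂ) (Y2H : Matrix (Fin s) (Fin n) ℂ)
    (hinv1 : fromCols X1 X2 * fromRows Y1H Y2H = 1)
    (hinv2 : fromRows Y1H Y2H * fromCols X1 X2 = 1)
    (Λ1 : Fin r → ℂ) (Λ2 : Fin s → ℂ)
    (hdiag : N⁻¹ * M = X1 * Matrix.diagonal Λ1 * Y1H + X2 * Matrix.diagonal Λ2 * Y2H)
    (lamhat : ℂ) (uhat : Fin n → ℂ)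
    (δ : ℝ) (hδ : 0 < δ) (hsep : ∀ i, δ ≤ ‖Λ2 i - lamhat‖)
    (X1p : Matrix (Fin r) (Fin n) ℂ)
    (hmp1 : X1 * X1p * X1 = X1) (hmp2 : X1p * X1 * X1p = X1p)
    (hmp3 : (X1 * X1p)ᴴ = X1 * X1p) (hmp4 : (X1p * X1)ᴴ = X1p * X1) :
    evNorm (((1 : Matrix (Fin n) (Fin n) ℂ) - X1pᴴ * X1ᴴ) *ᵥ uhat) ≤
      Real.sqrt (specNormC N * specNormC N⁻¹) *
        evNorm ((N⁻¹ * M - lamhat • 1) *ᵥ uhat) / δ :=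
  generalized_davis_kahan_general M N hM hN X1 X2 Y1H Y2H hinv1 hinv2 Λ1 Λ2 hdiag lamhat uhat δ hδ
    hsep X1p hmp1 hmp3
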